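/- arXiv:2605.19198 — 6 statements merged into one kernel-verified Lean document; each statement's English description precedes it below -/
import Mathlib

section
/- Scalar Fisher-information data-processing inequality for finite stochastic kernels (one-parameter instance of Supplementary Theorem S4): Let X and Z be finite nonempty types. Let k : X → Z → ℝ satisfy k x z ≥ 0 and ∑_z k x z = 1 for every x (a parameter-independent stochastic kernel). Let p : ℝ → X → ℝ be a family with p θ₀ x > 0 for all x, ∑_x p t x = 1 for all t, and with t ↦ p t x differentiable at θ₀ for every x. Define q t z = ∑_x k x z · p t x and assume q θ₀ z > 0 for all z. Then ∑_z (d/dt q t z |_{t=θ₀})² / q θ₀ z ≤ ∑_x (d/dt p t x |_{t=θ₀})² / p θ₀ x. -/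
/-!
Differentiating `q t z = ∑ x, k x z * p t x` under the finite sum gives `q' z = ∑ x, k x z * p' x`.
For each `z`, Cauchy–Schwarz with weights `k x z` (Sedrakyan's form) bounds `q' z ^ 2 / q z` by
`∑ x, k x z * (p' x ^ 2 / p x)`; summing over `z` and using `∑ z, k x z = 1` gives the claim.
-/

open Finset

noncomputable def fisherInformation {X : Type*} [Fintype X] (p : ℝ → X → ℝ) (θ : ℝ) : ℝ :=
  ∑ x, deriv (fun t => p t x) θ ^ 2 / p θ x

theorem sq_sum_mul_div_sum_mul_le {ι : Type*} (s : Finset ι) {w a : ι → ℝ} (b : ι → ℝ)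
    (hw : ∀ i ∈ s, 0 ≤ w i) (ha : ∀ i ∈ s, 0 < a i) :
    (∑ i ∈ s, w i * b i) ^ 2 / ∑ i ∈ s, w i * a i ≤ ∑ i ∈ s, w i * (b i ^ 2 / a i) := by
  have hwa : ∀ i ∈ s, 0 ≤ w i * a i := fun i hi => mul_nonneg (hw i hi) (ha i hi).le
  have hwba : ∀ i ∈ s, 0 ≤ w i * (b i ^ 2 / a i) :=
    fun i hi => mul_nonneg (hw i hi) (div_nonneg (sq_nonneg _) (ha i hi).le)
  refine div_le_of_le_mul₀ (sum_nonneg hwa) (sum_nonneg hwba) ?_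
  rw [mul_comm]
  refine sum_sq_le_sum_mul_sum_of_sq_le_mul s hwa hwba fun i hi => le_of_eq ?_
  field_simp [(ha i hi).ne']

theorem deriv_sum_const_mul {X : Type*} [Fintype X] (c : X → ℝ) {p : ℝ → X → ℝ} {θ : ℝ}
    (hp : ∀ x, DifferentiableAt ℝ (fun t => p t x) θ) :
    deriv (fun t => ∑ x, c x * p t x) θ = ∑ x, c x * deriv (fun t => p t x) θ :=
  (HasDerivAt.fun_sum fun x _ => (hp x).hasDerivAt.const_mul (c x)).deriv

theorem fisherInformation_kernel_le {X Z : Type*} [Fintype X] [Fintype Z] {k : X → Z → ℝ}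
    (hk0 : ∀ x z, 0 ≤ k x z) (hk1 : ∀ x, ∑ z, k x z = 1) {p : ℝ → X → ℝ} {θ : ℝ}
    (hp_pos : ∀ x, 0 < p θ x) (hp_diff : ∀ x, DifferentiableAt ℝ (fun t => p t x) θ) :
    fisherInformation (fun t z => ∑ x, k x z * p t x) θ ≤ fisherInformation p θ := by
  calc fisherInformation (fun t z => ∑ x, k x z * p t x) θ
      = ∑ z, (∑ x, k x z * deriv (fun t => p t x) θ) ^ 2 / ∑ x, k x z * p θ x := by
        simp only [fisherInformation, deriv_sum_const_mul _ hp_diff]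
    _ ≤ ∑ z, ∑ x, k x z * (deriv (fun t => p t x) θ ^ 2 / p θ x) :=
        sum_le_sum fun z _ =>
          sq_sum_mul_div_sum_mul_le _ _ (fun x _ => hk0 x z) fun x _ => hp_pos x
    _ = fisherInformation p θ := by
        rw [sum_comm]
        simp only [← sum_mul, hk1, one_mul, fisherInformation]

theorem fisher_info_data_processing_finite_kernel_general
    {X Z : Type*} [Fintype X] [Fintype Z]
    (k : X → Z → ℝ)
    (hk0 : ∀ x z, 0 ≤ k x z)
    (hk1 : ∀ x, ∑ z, k x z = 1)
    (θ₀ : ℝ) (p : ℝ → X → ℝ)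
    (hp_pos : ∀ x, 0 < p θ₀ x)
    (hp_diff : ∀ x, DifferentiableAt ℝ (fun t => p t x) θ₀)
    (q : ℝ → Z → ℝ)
    (hq : ∀ t z, q t z = ∑ x, k x z * p t x) :
    ∑ z, (deriv (fun t => q t z) θ₀) ^ 2 / q θ₀ z
      ≤ ∑ x, (deriv (fun t => p t x) θ₀) ^ 2 / p θ₀ x := by
  obtain rfl : q = fun t z => ∑ x, k x z * p t x := funext₂ hq
  exact fisherInformation_kernel_le hk0 hk1 hp_pos hp_diff

/-- Scalar Fisher-information data-processing inequality for finite stochastic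
kernels (one-parameter instance of Supplementary Theorem S4). -/
theorem fisher_info_data_processing_finite_kernel
    {X Z : Type*} [Fintype X] [Nonempty X] [Fintype Z] [Nonempty Z]
    (k : X → Z → ℝ)
    (hk0 : ∀ x z, 0 ≤ k x z)
    (hk1 : ∀ x, ∑ z, k x z = 1)
    (θ₀ : ℝ) (p : ℝ → X → ℝ)
    (hp_pos : ∀ x, 0 < p θ₀ x)
    (hp_sum : ∀ t, ∑ x, p t x = 1)
    (hp_diff : ∀ x, DifferentiableAt ℝ (fun t => p t x) θ₀)
    (q : ℝ → Z → ℝ)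
    (hq : ∀ t z, q t z = ∑ x, k x z * p t x)
    (hq_pos : ∀ z, 0 < q θ₀ z) :
    ∑ z, (deriv (fun t => q t z) θ₀) ^ 2 / q θ₀ z
      ≤ ∑ x, (deriv (fun t => p t x) θ₀) ^ 2 / p θ₀ x :=
  fisher_info_data_processing_finite_kernel_general k hk0 hk1 θ₀ p hp_pos hp_diff q hq
end

section
/- Causal Fisher-information inequality for a classical causal path, finite-outcome version (Supplementary Theorem S5): Let C and B be finite nonempty types. Let α : ℝ → C → ℝ satisfy α θ₁ c > 0 for all c, ∑_c α t c = 1 for all t, with each t ↦ α t c differentiable at θ₁; let β : ℝ → C → B → ℝ satisfy β θ₂ c b > 0 for all c, b, ∑_b β t c b = 1 for all t and c, with each t ↦ β t c b differentiable at θ₂. Define F_ac = ∑_c (d/dt α t c |_{θ₁})² / α θ₁ c and F_cb = ∑_c α θ₁ c · ∑_b (d/dt β t c b |_{θ₂})² / β θ₂ c b, and assume F_ac > 0 and F_cb > 0. Define the endpoint marginal p b (t₁, t₂) = ∑_c α t₁ c · β t₂ c b, its partial derivatives ∂₁p b = ∑_c (d/dt α t c |_{θ₁}) · β θ₂ c b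 and ∂₂p b = ∑_c α θ₁ c · (d/dt β t c b |_{θ₂}), and the 2×2 endpoint Fisher matrix M with M_{ij} = ∑_b (∂_i p b)(∂_j p b) / p b (θ₁, θ₂), assumed positive definite. Then with u = (1,1)ᵀ, uᵀ M⁻¹ u ≥ 1/F_ac + 1/F_cb; that is, the effective endpoint Fisher information F_ab^{(B)} := (uᵀ M⁻¹ u)⁻¹ for the additive parameter θ_ab = θ_ac + θ_cb satisfies (F_ab^{(B)})⁻¹ ≥ F_ac⁻¹ + F_cb⁻¹. -/
/-!
For positive semidefinite invertible `M`, expanding `0 ≤ (v - M⁻¹u)ᵀ M (v - M⁻¹u)` gives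
`uᵀ M⁻¹ u ≥ 2 uᵀv - vᵀ M v` for every `v`. Take `u = (1, 1)` and `v = (1/F_ac, 1/F_cb)`.
The quadratic form `vᵀ M v` is the Fisher information of the endpoint marginal of `B` along
`v`; by data processing it is at most that of the joint law of `(C, B)`, which by the chain rule
is `v₁² F_ac + v₂² F_cb = 1/F_ac + 1/F_cb = uᵀv`. Hence `uᵀ M⁻¹ u ≥ uᵀv`.
-/

open Matrix Finset

theorem Matrix.PosSemidef.two_mul_dotProduct_sub_le_dotProduct_inv_mulVec
    {n : Type*} [Fintype n] [DecidableEq n] {M : Matrix n n ℝ} (hM : M.PosSemidef)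
    (hM_unit : IsUnit M) (u v : n → ℝ) :
    2 * (u ⬝ᵥ v) - v ⬝ᵥ (M *ᵥ v) ≤ u ⬝ᵥ (M⁻¹ *ᵥ u) := by
  set w := M⁻¹ *ᵥ u
  have hMw : M *ᵥ w = u := by
    rw [mulVec_mulVec, mul_nonsing_inv _ (M.isUnit_iff_isUnit_det.mp hM_unit), one_mulVec]
  have hMt : Mᵀ = M := by simpa [conjTranspose_eq_transpose_of_trivial] using hM.isHermitian.eq
  have hwMv : w ⬝ᵥ (M *ᵥ v) = u ⬝ᵥ v := by
    rw [dotProduct_mulVec, ← mulVec_transpose, hMt, hMw]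
  have h := hM.dotProduct_mulVec_nonneg (v - w)
  simp only [star_trivial, mulVec_sub, sub_dotProduct, dotProduct_sub, hMw, hwMv] at h
  rw [dotProduct_comm v u, dotProduct_comm w u] at h
  linarith

theorem sum_deriv_eq_zero_of_sum_eq_const {ι : Type*} [Fintype ι] {f : ℝ → ι → ℝ} {k x : ℝ}
    (hsum : ∀ t, ∑ i, f t i = k) (hf : ∀ i, DifferentiableAt ℝ (fun t => f t i) x) :
    ∑ i, deriv (fun t => f t i) x = 0 := by
  rw [← deriv_fun_sum fun i _ => hf i]
  simp [hsum]

/-- `p'` is the derivative of the probabilities `p` along the parameter. -/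
noncomputable def fisherInfo {ι : Type*} [Fintype ι] (p p' : ι → ℝ) : ℝ :=
  ∑ i, p' i ^ 2 / p i

section fisherInfo

variable {ι κ : Type*} [Fintype ι] [Fintype κ]

theorem dotProduct_mulVec_eq_fisherInfo {M : Matrix ι ι ℝ} {p : κ → ℝ} {dp : ι → κ → ℝ}
    (hM : ∀ i j, M i j = ∑ k, dp i k * dp j k / p k) (v : ι → ℝ) :
    v ⬝ᵥ (M *ᵥ v) = fisherInfo p (fun k => ∑ i, v i * dp i k) := by
  simp only [fisherInfo, dotProduct, mulVec, hM, sq, sum_mul, mul_sum, sum_div]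
  symm
  rw [sum_comm]
  refine sum_congr rfl fun i _ => ?_
  rw [sum_comm]
  exact sum_congr rfl fun j _ => sum_congr rfl fun k _ => by ring

/-- Data processing, from Sedrakyan's form of Cauchy–Schwarz in each fibre. -/
theorem fisherInfo_marginal_le {p p' : ι → κ → ℝ} (hp : ∀ i k, 0 < p i k) :
    fisherInfo (fun k => ∑ i, p i k) (fun k => ∑ i, p' i k)
      ≤ ∑ k, fisherInfo (fun i => p i k) (fun i => p' i k) :=
  sum_le_sum fun k _ => sq_sum_div_le_sum_sq_div _ _ fun i _ => hp i k

/-- Chain rule for the joint law `a i * q i k`; the cross term vanishes because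
`∑ k, q' i k = 0`. -/
theorem sum_fisherInfo_chain {a a' : ι → ℝ} {q q' : ι → κ → ℝ} (ha : ∀ i, a i ≠ 0)
    (hq : ∀ i k, q i k ≠ 0) (hq_sum : ∀ i, ∑ k, q i k = 1) (hq'_sum : ∀ i, ∑ k, q' i k = 0)
    (s t : ℝ) :
    ∑ k, fisherInfo (fun i => a i * q i k) (fun i => s * a' i * q i k + t * a i * q' i k)
      = s ^ 2 * fisherInfo a a' + t ^ 2 * ∑ i, a i * fisherInfo (q i) (q' i) := by
  simp only [fisherInfo]
  rw [sum_comm, mul_sum, mul_sum, ← sum_add_distrib]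
  refine sum_congr rfl fun i _ => ?_
  have hterm : ∀ k, (s * a' i * q i k + t * a i * q' i k) ^ 2 / (a i * q i k)
      = s ^ 2 * (a' i ^ 2 / a i) * q i k + 2 * s * t * a' i * q' i k
        + t ^ 2 * a i * (q' i k ^ 2 / q i k) := by
    intro k
    field_simp [ha i, hq i k]
    ring
  simp only [hterm, sum_add_distrib, ← mul_sum, hq_sum, hq'_sum]
  ring

end fisherInfo

theorem causal_path_CFII_finite_general
    {C B : Type*} [Fintype C] [Fintype B]
    (θ₁ θ₂ : ℝ)
    (α : ℝ → C → ℝ)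
    (hα_pos : ∀ c, 0 < α θ₁ c)
    (β : ℝ → C → B → ℝ)
    (hβ_pos : ∀ c b, 0 < β θ₂ c b)
    (hβ_sum : ∀ t c, ∑ b, β t c b = 1)
    (hβ_diff : ∀ c b, DifferentiableAt ℝ (fun t => β t c b) θ₂)
    (Fac Fcb : ℝ)
    (hFac : Fac = ∑ c, (deriv (fun t => α t c) θ₁) ^ 2 / α θ₁ c)
    (hFcb : Fcb = ∑ c, α θ₁ c * ∑ b, (deriv (fun t => β t c b) θ₂) ^ 2 / β θ₂ c b)
    (dp : Fin 2 → B → ℝ)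
    (hdp0 : ∀ b, dp 0 b = ∑ c, (deriv (fun t => α t c) θ₁) * β θ₂ c b)
    (hdp1 : ∀ b, dp 1 b = ∑ c, α θ₁ c * (deriv (fun t => β t c b) θ₂))
    (M : Matrix (Fin 2) (Fin 2) ℝ)
    (hM : ∀ i j, M i j = ∑ b, dp i b * dp j b / (∑ c, α θ₁ c * β θ₂ c b))
    (hMpd : M.PosDef) :
    (![1, 1] : Fin 2 → ℝ) ⬝ᵥ (M⁻¹ *ᵥ ![1, 1]) ≥ 1 / Fac + 1 / Fcb := by
  set x := 1 / Fac
  set y := 1 / Fcb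
  have hβ'_sum : ∀ c, ∑ b, deriv (fun t => β t c b) θ₂ = 0 := fun c =>
    sum_deriv_eq_zero_of_sum_eq_const (fun t => hβ_sum t c) (hβ_diff c)
  have hsq_mul (F : ℝ) : (1 / F) ^ 2 * F = 1 / F := by
    rw [div_pow, one_pow, div_mul_eq_mul_div, one_mul, sq, div_self_mul_self', one_div]
  have hquad : ![x, y] ⬝ᵥ (M *ᵥ ![x, y]) ≤ x + y := calc
    _ = fisherInfo (fun b => ∑ c, α θ₁ c * β θ₂ c b) (fun b => ∑ c,
          (x * deriv (fun t => α t c) θ₁ * β θ₂ c b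
            + y * α θ₁ c * deriv (fun t => β t c b) θ₂)) := by
      rw [dotProduct_mulVec_eq_fisherInfo hM]
      congr 1
      funext b
      simp only [Fin.sum_univ_two, Matrix.cons_val_zero, Matrix.cons_val_one, hdp0, hdp1,
        mul_sum, ← sum_add_distrib, mul_assoc]
    _ ≤ _ := fisherInfo_marginal_le fun c b => mul_pos (hα_pos c) (hβ_pos c b)
    _ = x ^ 2 * Fac + y ^ 2 * Fcb := by
      rw [sum_fisherInfo_chain (fun c => (hα_pos c).ne') (fun c b => (hβ_pos c b).ne')
        (hβ_sum θ₂) hβ'_sum, hFac, hFcb]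
      rfl
    _ = x + y := by rw [hsq_mul, hsq_mul]
  have hvar := hMpd.posSemidef.two_mul_dotProduct_sub_le_dotProduct_inv_mulVec
    hMpd.isUnit ![1, 1] ![x, y]
  have hsum : (![1, 1] : Fin 2 → ℝ) ⬝ᵥ ![x, y] = x + y := by
    simp [dotProduct, Fin.sum_univ_two]
  linarith

/-- Causal Fisher-information inequality for a classical causal path,
finite-outcome version (Supplementary Theorem S5): the effective endpoint Fisher
information for the additive parameter obeys the series law
`(F_ab^{(B)})⁻¹ ≥ F_ac⁻¹ + F_cb⁻¹`. -/
theorem causal_path_CFII_finite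
    {C B : Type*} [Fintype C] [Nonempty C] [Fintype B] [Nonempty B]
    (θ₁ θ₂ : ℝ)
    (α : ℝ → C → ℝ)
    (hα_pos : ∀ c, 0 < α θ₁ c)
    (hα_sum : ∀ t, ∑ c, α t c = 1)
    (hα_diff : ∀ c, DifferentiableAt ℝ (fun t => α t c) θ₁)
    (β : ℝ → C → B → ℝ)
    (hβ_pos : ∀ c b, 0 < β θ₂ c b)
    (hβ_sum : ∀ t c, ∑ b, β t c b = 1)
    (hβ_diff : ∀ c b, DifferentiableAt ℝ (fun t => β t c b) θ₂)
    (Fac Fcb : ℝ)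
    (hFac : Fac = ∑ c, (deriv (fun t => α t c) θ₁) ^ 2 / α θ₁ c)
    (hFcb : Fcb = ∑ c, α θ₁ c * ∑ b, (deriv (fun t => β t c b) θ₂) ^ 2 / β θ₂ c b)
    (hFac_pos : 0 < Fac) (hFcb_pos : 0 < Fcb)
    (dp : Fin 2 → B → ℝ)
    (hdp0 : ∀ b, dp 0 b = ∑ c, (deriv (fun t => α t c) θ₁) * β θ₂ c b)
    (hdp1 : ∀ b, dp 1 b = ∑ c, α θ₁ c * (deriv (fun t => β t c b) θ₂))
    (M : Matrix (Fin 2) (Fin 2) ℝ)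
    (hM : ∀ i j, M i j = ∑ b, dp i b * dp j b / (∑ c, α θ₁ c * β θ₂ c b))
    (hMpd : M.PosDef) :
    (![1, 1] : Fin 2 → ℝ) ⬝ᵥ (M⁻¹ *ᵥ ![1, 1]) ≥ 1 / Fac + 1 / Fcb :=
  causal_path_CFII_finite_general θ₁ θ₂ α hα_pos β hβ_pos hβ_sum hβ_diff Fac Fcb hFac hFcb dp hdp0
    hdp1 M hM hMpd
end

section
/- Exact synergy window for beating the classical series law (part (ii) of Supplementary Theorem S14): Let F₁, F₂, J be real numbers with F₁ > 0, F₂ > 0 and F₁F₂ − J² > 0. Then the effective Fisher information F^{(u)} = (F₁F₂ − J²) / (F₁ + F₂ − 2J) exceeds the classical series benchmark F_series = F₁F₂ / (F₁ + F₂) = (F₁⁻¹ + F₂⁻¹)⁻¹ if and only if 0 < J < 2F₁F₂ / (F₁ + F₂). -/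
/-- Exact synergy window for beating the classical series law
(part (ii) of Supplementary Theorem S14). -/
theorem synergy_window
    (F₁ F₂ J : ℝ) (hF₁ : 0 < F₁) (hF₂ : 0 < F₂) (hdet : 0 < F₁ * F₂ - J ^ 2) :
    (F₁ * F₂ - J ^ 2) / (F₁ + F₂ - 2 * J) > F₁ * F₂ / (F₁ + F₂)
      ↔ (0 < J ∧ J < 2 * F₁ * F₂ / (F₁ + F₂)) := by
  have hsum : 0 < F₁ + F₂ := by linarith
  have hden : 0 < F₁ + F₂ - 2 * J := by nlinarith [sq_nonneg (F₁ - F₂), sq_nonneg (F₁ + F₂ - 2*J), sq_nonneg J]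
  rw [gt_iff_lt, div_lt_div_iff₀ hsum hden, lt_div_iff₀ hsum]
  constructor
  · intro h
    constructor
    · nlinarith
    · nlinarith
  · rintro ⟨h1, h2⟩
    nlinarith
end

section
/- Supremum of the synergetic effective Fisher information (part (iii) of Supplementary Theorem S14): Fix real numbers F₁ > 0 and F₂ > 0, and consider the set S = { (F₁F₂ − J²) / (F₁ + F₂ − 2J) : J ∈ ℝ, J² < F₁F₂ }. Then the supremum of S equals min{F₁, F₂}; i.e. min{F₁, F₂} is the least upper bound of the effective Fisher information F^{(u)}(J) = (F₁F₂ − J²)/(F₁ + F₂ − 2J) over all score covariances J compatible with positive definiteness of the Fisher matrix [[F₁, J], [J, F₂]]. Moreover, when F₁ ≠ F₂ this supremum is attained at J = min{F₁, F₂}, while for F₁ = F₂ = F the value F^{(u)} = (F + J)/2 approaches F only in the limit J → F⁻. -/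
private lemma denom_pos {F₁ F₂ J : ℝ} (hF₁ : 0 < F₁) (hF₂ : 0 < F₂)
    (hJ : J ^ 2 < F₁ * F₂) : 0 < F₁ + F₂ - 2 * J := by
  by_contra h
  push_neg at h
  nlinarith [sq_nonneg (F₁ - F₂), sq_nonneg (F₁ + F₂)]

private lemma ub {F₁ F₂ J : ℝ} (hF₁ : 0 < F₁) (hF₂ : 0 < F₂)
    (hJ : J ^ 2 < F₁ * F₂) :
    (F₁ * F₂ - J ^ 2) / (F₁ + F₂ - 2 * J) ≤ min F₁ F₂ := by
  have hd := denom_pos hF₁ hF₂ hJ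
  rw [div_le_iff₀ hd]
  rcases min_cases F₁ F₂ with ⟨h, _⟩ | ⟨h, _⟩ <;> rw [h] <;>
    nlinarith [sq_nonneg (F₁ - J), sq_nonneg (F₂ - J)]

/-- Supremum of the synergetic effective Fisher information
(part (iii) of Supplementary Theorem S14): over all admissible score covariances
`J`, the supremum of `F^{(u)}(J) = (F₁F₂ − J²)/(F₁ + F₂ − 2J)` is `min F₁ F₂`;
it is attained at `J = min F₁ F₂` when `F₁ ≠ F₂`, while for `F₁ = F₂` the value
equals `(F₁ + J)/2` and the supremum is not attained. -/
theorem synergy_supremum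
    (F₁ F₂ : ℝ) (hF₁ : 0 < F₁) (hF₂ : 0 < F₂) :
    IsLUB {y : ℝ | ∃ J : ℝ, J ^ 2 < F₁ * F₂ ∧
        y = (F₁ * F₂ - J ^ 2) / (F₁ + F₂ - 2 * J)} (min F₁ F₂) ∧
    (F₁ ≠ F₂ →
      (min F₁ F₂) ^ 2 < F₁ * F₂ ∧
      (F₁ * F₂ - (min F₁ F₂) ^ 2) / (F₁ + F₂ - 2 * min F₁ F₂) = min F₁ F₂) ∧
    (F₁ = F₂ →
      (∀ J : ℝ, J ^ 2 < F₁ * F₂ →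
        (F₁ * F₂ - J ^ 2) / (F₁ + F₂ - 2 * J) = (F₁ + J) / 2) ∧
      min F₁ F₂ ∉ {y : ℝ | ∃ J : ℝ, J ^ 2 < F₁ * F₂ ∧
        y = (F₁ * F₂ - J ^ 2) / (F₁ + F₂ - 2 * J)} ∧
      Filter.Tendsto (fun J : ℝ => (F₁ + J) / 2) (nhdsWithin F₁ (Set.Iio F₁))
        (nhds F₁)) := by
  have hattain : F₁ ≠ F₂ →
      (min F₁ F₂) ^ 2 < F₁ * F₂ ∧
      (F₁ * F₂ - (min F₁ F₂) ^ 2) / (F₁ + F₂ - 2 * min F₁ F₂) = min F₁ F₂ := by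
    intro hne
    rcases lt_or_gt_of_ne hne with h | h
    · have hm : min F₁ F₂ = F₁ := min_eq_left h.le
      constructor
      · rw [hm]; nlinarith
      · rw [hm]
        have hd : 0 < F₁ + F₂ - 2 * F₁ := by linarith
        rw [div_eq_iff hd.ne']
        ring
    · have hm : min F₁ F₂ = F₂ := min_eq_right h.le
      constructor
      · rw [hm]; nlinarith
      · rw [hm]
        have hd : 0 < F₁ + F₂ - 2 * F₂ := by linarith
        rw [div_eq_iff hd.ne']
        ring
  have heq : F₁ = F₂ → ∀ J : ℝ, J ^ 2 < F₁ * F₂ →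
      (F₁ * F₂ - J ^ 2) / (F₁ + F₂ - 2 * J) = (F₁ + J) / 2 := by
    intro hE J hJ
    subst hE
    have hd := denom_pos hF₁ hF₁ hJ
    rw [div_eq_div_iff hd.ne' (by norm_num : (2:ℝ) ≠ 0)]
    ring
  refine ⟨⟨?_, ?_⟩, hattain, ?_⟩
  · rintro y ⟨J, hJ, rfl⟩
    exact ub hF₁ hF₂ hJ
  · -- least upper bound
    intro b hb
    by_contra hlt
    push_neg at hlt
    by_cases hne : F₁ ≠ F₂
    · obtain ⟨h1, h2⟩ := hattain hne
      have : (F₁ * F₂ - (min F₁ F₂) ^ 2) / (F₁ + F₂ - 2 * min F₁ F₂) ≤ b :=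
        hb ⟨min F₁ F₂, h1, rfl⟩
      rw [h2] at this
      exact absurd this (not_le.mpr hlt)
    · push_neg at hne
      subst hne
      rw [min_self] at hlt
      -- choose J strictly between 2b - F₁ and F₁, nonneg
      set J : ℝ := (max (2 * b - F₁) 0 + F₁) / 2 with hJdef
      have hmlt : max (2 * b - F₁) 0 < F₁ := by
        rcases max_cases (2 * b - F₁) 0 with ⟨h, _⟩ | ⟨h, _⟩ <;> rw [h] <;> linarith
      have hJ0 : 0 ≤ J := by
        have := le_max_right (2 * b - F₁) 0
        rw [hJdef]; linarith
      have hJlt : J < F₁ := by rw [hJdef]; linarith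
      have hJsq : J ^ 2 < F₁ * F₁ := by nlinarith
      have hmem : (F₁ * F₁ - J ^ 2) / (F₁ + F₁ - 2 * J) ≤ b :=
        hb ⟨J, hJsq, rfl⟩
      rw [heq rfl J hJsq] at hmem
      have : 2 * b - F₁ ≤ max (2 * b - F₁) 0 := le_max_left _ _
      have : J > 2 * b - F₁ := by rw [hJdef]; linarith
      linarith
  · intro hE
    refine ⟨heq hE, ?_, ?_⟩
    · rintro ⟨J, hJ, habs⟩
      rw [heq hE J hJ] at habs
      subst hE
      rw [min_self] at habs
      have hJlt : J < F₁ := by nlinarith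
      have : J = F₁ := by linarith [habs.symm ▸ (by linarith : (F₁:ℝ) = F₁)]
      -- derive J = F₁ from (F₁ + J)/2 = F₁
      linarith [habs]
    · have h1 : Filter.Tendsto (fun J : ℝ => (F₁ + J) / 2) (nhds F₁)
          (nhds ((F₁ + F₁) / 2)) := by
        apply Filter.Tendsto.div_const
        exact (continuous_const.add continuous_id).tendsto F₁
      have h2 : (F₁ + F₁) / 2 = F₁ := by ring
      rw [h2] at h1
      exact h1.mono_left nhdsWithin_le_nhds
end

section
/- Deterministic single-qubit collapse of the causal-path model (Supplementary Result S1): Fix ϑ ∈ ℝ and define z : ℝ → ℝ by z(θ) = cos ϑ · cos θ + sin ϑ · sin θ, so that z(θ) = cos(θ − ϑ). For every θ with sin(θ − ϑ) ≠ 0, the binary-readout Fisher information F(θ) := (z′(θ))² / (1 − z(θ)²) satisfies F(θ) = 1. Consequently, for all θ_ac > 0 and θ_cb > 0 with θ_ab = θ_ac + θ_cb such that sin(θ_ab − ϑ) ≠ 0, sin(θ_ac − ϑ) ≠ 0 and sin(θ_cb − ϑ) ≠ 0, the causal-path violation statistic V = F(θ_ab)⁻¹ − F(θ_ac)⁻¹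 − F(θ_cb)⁻¹ equals −1, and the achieved Fisher information exceeds the classical causal-path benchmark (F(θ_ac)⁻¹ + F(θ_cb)⁻¹)⁻¹ = 1/2 by an exact factor of two. -/
/-- Deterministic single-qubit collapse of the causal-path model
(Supplementary Result S1): at the coherent point the binary-readout Fisher
information is identically `1`, the causal-path violation statistic equals `−1`
for every nontrivial split, the classical benchmark is `1/2`, and the achieved
Fisher information beats it by an exact factor of two. -/
theorem single_qubit_deterministic_collapse
    (ϑ : ℝ)
    (z : ℝ → ℝ) (hz : ∀ θ, z θ = Real.cos ϑ * Real.cos θ + Real.sin ϑ * Real.sin θ)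
    (F : ℝ → ℝ) (hF : ∀ θ, F θ = (deriv z θ) ^ 2 / (1 - (z θ) ^ 2)) :
    (∀ θ, Real.sin (θ - ϑ) ≠ 0 → F θ = 1) ∧
    (∀ θac θcb : ℝ, 0 < θac → 0 < θcb →
      Real.sin (θac + θcb - ϑ) ≠ 0 → Real.sin (θac - ϑ) ≠ 0 → Real.sin (θcb - ϑ) ≠ 0 →
      (F (θac + θcb))⁻¹ - (F θac)⁻¹ - (F θcb)⁻¹ = -1 ∧
      ((F θac)⁻¹ + (F θcb)⁻¹)⁻¹ = 1 / 2 ∧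
      F (θac + θcb) = 2 * ((F θac)⁻¹ + (F θcb)⁻¹)⁻¹) := by
  have hzfun : z = fun θ => Real.cos ϑ * Real.cos θ + Real.sin ϑ * Real.sin θ :=
    funext hz
  have hFone : ∀ θ, Real.sin (θ - ϑ) ≠ 0 → F θ = 1 := by
    intro θ hs
    have hderiv : deriv z θ = -Real.sin (θ - ϑ) := by
      rw [hzfun]
      have : HasDerivAt (fun θ => Real.cos ϑ * Real.cos θ + Real.sin ϑ * Real.sin θ)
          (Real.cos ϑ * (-Real.sin θ) + Real.sin ϑ * Real.cos θ) θ := by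
        exact ((Real.hasDerivAt_cos θ).const_mul (Real.cos ϑ)).add
          ((Real.hasDerivAt_sin θ).const_mul (Real.sin ϑ))
      rw [this.deriv, Real.sin_sub]; ring
    have hzθ : z θ = Real.cos (θ - ϑ) := by
      rw [hz, Real.cos_sub]; ring
    have hcs : Real.sin (θ - ϑ) ^ 2 = 1 - Real.cos (θ - ϑ) ^ 2 := by
      nlinarith [Real.sin_sq_add_cos_sq (θ - ϑ)]
    have hne : 1 - Real.cos (θ - ϑ) ^ 2 ≠ 0 := by
      rw [← hcs]; positivity
    rw [hF, hderiv, hzθ, neg_pow, ← hcs]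
    simp [div_self, pow_ne_zero_iff, hs]
  refine ⟨hFone, fun θac θcb _ _ hab hac hcb => ?_⟩
  rw [hFone _ hab, hFone _ hac, hFone _ hcb]
  norm_num
end

section
/- Chain-amplified collapse and gain for constant Fisher information (Supplementary Result S3): Let F₀ > 0 and let F : ℝ → ℝ satisfy F(θ) = F₀ for all θ > 0. Let K ≥ 2 be a natural number and let θ₁, …, θ_K be strictly positive reals with total θ_ab = ∑_{j=1}^K θ_j. Then: (i) the K-step violation statistic V_K = F(θ_ab)⁻¹ − ∑_{j=1}^K F(θ_j)⁻¹ equals −(K−1)/F₀ and is strictly negative; (ii) the K-step classical benchmark F_cl^{(K)} = (∑_{j=1}^K F(θ_j)⁻¹)⁻¹ equals F₀/K; and (iii) the gain ratio Γ_K = F(θ_ab) / F_cl^{(K)} equals K. -/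
/-!
With constant Fisher information every segment of the chain contributes the same inverse
information `1 / F₀`, so the `K` segments together contribute `K / F₀` while the whole interval
contributes only `1 / F₀`: the classical frontier is `F₀ / K`, and the gap grows linearly in `K`.
-/

open Finset

noncomputable section

def chainViolation {ι : Type*} [Fintype ι] (F : ℝ → ℝ) (θab : ℝ) (θ : ι → ℝ) : ℝ :=
  (F θab)⁻¹ - ∑ j, (F (θ j))⁻¹

def classicalBenchmark {ι : Type*} [Fintype ι] (F : ℝ → ℝ) (θ : ι → ℝ) : ℝ :=
  (∑ j, (F (θ j))⁻¹)⁻¹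

section ConstantFisher

variable {ι : Type*} [Fintype ι] {F : ℝ → ℝ} {F₀ θab : ℝ} {θ : ι → ℝ}

theorem sum_inv_eq_card_div_of_forall_eq (hθ : ∀ j, F (θ j) = F₀) :
    ∑ j, (F (θ j))⁻¹ = Fintype.card ι / F₀ := by
  simp only [hθ, sum_const, card_univ, nsmul_eq_mul, div_eq_mul_inv]

theorem classicalBenchmark_of_forall_eq (hθ : ∀ j, F (θ j) = F₀) :
    classicalBenchmark F θ = F₀ / Fintype.card ι := by
  rw [classicalBenchmark, sum_inv_eq_card_div_of_forall_eq hθ, inv_div]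

theorem chainViolation_of_forall_eq (hab : F θab = F₀) (hθ : ∀ j, F (θ j) = F₀) :
    chainViolation F θab θ = -((Fintype.card ι : ℝ) - 1) / F₀ := by
  rw [chainViolation, sum_inv_eq_card_div_of_forall_eq hθ, hab]
  ring

theorem chainViolation_neg_of_forall_eq (hF₀ : 0 < F₀) (hcard : 1 < Fintype.card ι)
    (hab : F θab = F₀) (hθ : ∀ j, F (θ j) = F₀) :
    chainViolation F θab θ < 0 := by
  have hcard' : (1 : ℝ) < Fintype.card ι := by exact_mod_cast hcard
  rw [chainViolation_of_forall_eq hab hθ, neg_div]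
  exact neg_neg_of_pos (div_pos (sub_pos.2 hcard') hF₀)

theorem div_classicalBenchmark_of_forall_eq (hF₀ : F₀ ≠ 0) (hab : F θab = F₀)
    (hθ : ∀ j, F (θ j) = F₀) :
    F θab / classicalBenchmark F θ = Fintype.card ι := by
  rw [classicalBenchmark_of_forall_eq hθ, hab, div_div_cancel₀ hF₀]

end ConstantFisher

end

/-- Chain-amplified collapse and gain for constant Fisher information
(Supplementary Result S3): for a readout with constant Fisher information `F₀`,
every `K`-step causal-path decomposition yields `V_K = −(K−1)/F₀ < 0`, the
classical benchmark `F₀/K`, and gain ratio exactly `K`. -/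
theorem chain_amplified_gain
    (F₀ : ℝ) (hF₀ : 0 < F₀)
    (F : ℝ → ℝ) (hF : ∀ θ : ℝ, 0 < θ → F θ = F₀)
    (K : ℕ) (hK : 2 ≤ K)
    (θ : Fin K → ℝ) (hθ : ∀ j, 0 < θ j)
    (θab : ℝ) (hθab : θab = ∑ j, θ j) :
    ((F θab)⁻¹ - ∑ j, (F (θ j))⁻¹ = -((K : ℝ) - 1) / F₀ ∧
      (F θab)⁻¹ - ∑ j, (F (θ j))⁻¹ < 0) ∧
    (∑ j, (F (θ j))⁻¹)⁻¹ = F₀ / K ∧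
    F θab / (∑ j, (F (θ j))⁻¹)⁻¹ = K := by
  have hθab_pos : 0 < θab :=
    hθab ▸ sum_pos (fun j _ => hθ j) (univ_nonempty_iff.2 ⟨⟨0, by omega⟩⟩)
  have hab : F θab = F₀ := hF θab hθab_pos
  have hsegments : ∀ j, F (θ j) = F₀ := fun j => hF _ (hθ j)
  have hcard : 1 < Fintype.card (Fin K) := by rw [Fintype.card_fin]; omega
  have hV := chainViolation_of_forall_eq hab hsegments
  have hcl := classicalBenchmark_of_forall_eq hsegments
  have hgain := div_classicalBenchmark_of_forall_eq hF₀.ne' hab hsegments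
  rw [Fintype.card_fin] at hV hcl hgain
  exact ⟨⟨hV, chainViolation_neg_of_forall_eq hF₀ hcard hab hsegments⟩, hcl, hgain⟩
end
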